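/- arXiv:1703.00139 — 3 statements merged into one kernel-verified Lean document; each statement's English description precedes it below -/
import Mathlib

section
/- Let k ≥ 2 and let P_π be a weighted poset on {1,…,2^k}. If the extended binary Hamming code H̃_k is a 2-perfect P_π-code, then every element of P_π has P_π-weight at most 2; that is, for every i ∈ {1,…,2^k}, the weight of the order ideal generated by i satisfies Σ_{j ⪯ i} π(j) ≤ 2. -/
open Classical

noncomputable def wtP {α : Type*} [Fintype α] (le : α → α → Prop) (π : α → ℕ)
    (x : α → ZMod 2) : ℕ :=
  ∑ j ∈ Finset.univ.filter (fun j => ∃ i, x i ≠ 0 ∧ le j i), π j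

noncomputable def dP {α : Type*} [Fintype α] (le : α → α → Prop) (π : α → ℕ)
    (x y : α → ZMod 2) : ℕ :=
  wtP le π (x - y)

def IsCovering {β : Type*} (d : β → β → ℕ) (C : Set β) (r : ℕ) : Prop :=
  ∀ x, ∃ c ∈ C, d c x ≤ r

def IsPacking {β : Type*} (d : β → β → ℕ) (C : Set β) (r : ℕ) : Prop :=
  ∀ c₁ ∈ C, ∀ c₂ ∈ C, c₁ ≠ c₂ → ∀ x, ¬(d c₁ x ≤ r ∧ d c₂ x ≤ r)

def extHamming (k : ℕ) : Set (Fin (2 ^ k) → ZMod 2) :=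
  {x | (∑ i, x i) = 0 ∧
    ∀ j < k, (∑ i ∈ Finset.univ.filter (fun i : Fin (2 ^ k) => Nat.testBit i.val j), x i) = 0}

/-!
Since every weight is positive and the order is reflexive, the `P_π`-distance dominates the
Hamming distance. So a codeword within `P_π`-distance 2 of the unit vector `eᵢ` has Hamming
weight at most 3. Codewords of the extended Hamming code have even weight, and weight 2 is
impossible because two distinct columns of `H_k` differ in some bit; hence that codeword is 0,
and the `P_π`-weight of `eᵢ`, which is the weight of the ideal generated by `i`, is at most 2.
-/

open Finset

lemma sum_zmod_two_eq_card_filter {α : Type*} (x : α → ZMod 2) (t : Finset α) :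
    ∑ i ∈ t, x i = #(t.filter (fun i => x i ≠ 0)) := by
  have hx : ∀ i, x i = if x i ≠ 0 then 1 else 0 := fun i => by
    generalize x i = a; revert a; decide
  rw [sum_congr rfl (fun i _ => hx i), sum_boole]

lemma iff_of_even_card_filter_pair {α : Type*} [DecidableEq α] {p : α → Prop} [DecidablePred p]
    {a b : α} (h : Even #(({a, b} : Finset α).filter p)) : p a ↔ p b := by
  by_cases ha : p a <;> by_cases hb : p b <;>
    simp_all [filter_insert, filter_singleton]

namespace extHamming

variable {k : ℕ} {c : Fin (2 ^ k) → ZMod 2}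

lemma even_hammingNorm (hc : c ∈ extHamming k) : Even (hammingNorm c) := by
  rw [← ZMod.natCast_eq_zero_iff_even, hammingNorm, ← sum_zmod_two_eq_card_filter]
  exact hc.1

lemma hammingNorm_ne_two (hc : c ∈ extHamming k) : hammingNorm c ≠ 2 := by
  intro h2
  obtain ⟨a, b, hab, hsupp⟩ := card_eq_two.mp h2
  refine hab (Fin.ext (Nat.eq_of_testBit_eq fun j => ?_))
  by_cases hj : j < k
  · have hcheck := hc.2 j hj
    rw [sum_zmod_two_eq_card_filter, ZMod.natCast_eq_zero_iff_even, filter_filter] at hcheck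
    have hpair : (univ.filter fun i : Fin (2 ^ k) => i.val.testBit j ∧ c i ≠ 0) =
        ({a, b} : Finset _).filter fun i => i.val.testBit j := by
      rw [← hsupp, filter_filter]
      exact filter_congr fun _ _ => and_comm
    rw [hpair] at hcheck
    exact Bool.eq_iff_iff.mpr (iff_of_even_card_filter_pair hcheck)
  · have hkj : 2 ^ k ≤ 2 ^ j := Nat.pow_le_pow_right two_pos (not_lt.mp hj)
    rw [Nat.testBit_lt_two_pow (a.isLt.trans_le hkj), Nat.testBit_lt_two_pow (b.isLt.trans_le hkj)]

lemma eq_zero_of_hammingNorm_le_three (hc : c ∈ extHamming k) (h3 : hammingNorm c ≤ 3) :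
    c = 0 := by
  obtain ⟨m, hm⟩ := even_hammingNorm hc
  have hne := hammingNorm_ne_two hc
  rw [← hammingNorm_eq_zero]
  omega

end extHamming

lemma hammingNorm_single_le_one {ι : Type*} [Fintype ι] [DecidableEq ι] {β : ι → Type*}
    [∀ i, Zero (β i)] [∀ i, DecidableEq (β i)] (i : ι) (a : β i) :
    hammingNorm (Pi.single i a) ≤ 1 := by
  refine card_le_one.mpr fun j hj l hl => ?_
  simp only [mem_filter, mem_univ, true_and] at hj hl
  have hsupp : ∀ j, Pi.single i a j ≠ 0 → j = i := fun j hj => by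
    by_contra hji
    exact hj (Pi.single_eq_of_ne hji a)
  exact (hsupp j hj).trans (hsupp l hl).symm

section WeightedPoset

variable {α : Type*} [Fintype α] (le : α → α → Prop) (π : α → ℕ)

lemma hammingNorm_le_wtP (hrefl : ∀ i, le i i) (hπ : ∀ i, 0 < π i) (x : α → ZMod 2) :
    hammingNorm x ≤ wtP le π x := by
  calc hammingNorm x
      ≤ #(univ.filter fun j => ∃ i, x i ≠ 0 ∧ le j i) :=
        card_le_card fun j hj => by
          simp only [mem_filter, mem_univ, true_and] at hj ⊢
          exact ⟨j, hj, hrefl j⟩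
    _ ≤ wtP le π x := by simpa [wtP] using card_nsmul_le_sum _ π 1 fun j _ => hπ j

lemma wtP_neg (x : α → ZMod 2) : wtP le π (-x) = wtP le π x := by
  simp only [wtP, Pi.neg_apply, ne_eq, neg_eq_zero]

lemma hammingDist_le_dP (hrefl : ∀ i, le i i) (hπ : ∀ i, 0 < π i) (x y : α → ZMod 2) :
    hammingDist x y ≤ dP le π x y := by
  rw [hammingDist_eq_hammingNorm, neg_add_eq_sub, dP, ← wtP_neg, neg_sub]
  exact hammingNorm_le_wtP le π hrefl hπ _

lemma wtP_single [DecidableEq α] (i : α) :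
    wtP le π (Pi.single i 1) = ∑ j ∈ univ.filter (fun j => le j i), π j := by
  simp [wtP, Pi.single_apply]

end WeightedPoset

theorem stmt_11_general {k : ℕ}
    (le : Fin (2 ^ k) → Fin (2 ^ k) → Prop)
    (hrefl : ∀ i, le i i)
    (π : Fin (2 ^ k) → ℕ) (hπ : ∀ i, 0 < π i)
    (hperf : IsCovering (dP le π) (extHamming k) 2 ∧
      IsPacking (dP le π) (extHamming k) 2) :
    ∀ i : Fin (2 ^ k), (∑ j ∈ Finset.univ.filter (fun j => le j i), π j) ≤ 2 := by
  intro i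
  set e : Fin (2 ^ k) → ZMod 2 := Pi.single i 1
  obtain ⟨c, hc, hce⟩ := hperf.1 e
  have hdist : hammingDist c e ≤ 2 := (hammingDist_le_dP le π hrefl hπ c e).trans hce
  have hc0 : c = 0 := extHamming.eq_zero_of_hammingNorm_le_three hc <| calc
    hammingNorm c = hammingDist c 0 := (hammingDist_zero_right c).symm
    _ ≤ hammingDist c e + hammingDist e 0 := hammingDist_triangle c e 0
    _ ≤ 2 + 1 :=
      add_le_add hdist ((hammingDist_zero_right e).trans_le (hammingNorm_single_le_one i 1))
  rw [hc0, dP, zero_sub, wtP_neg, wtP_single] at hce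
  exact hce

theorem stmt_11 {k : ℕ} (hk : 2 ≤ k)
    (le : Fin (2 ^ k) → Fin (2 ^ k) → Prop)
    (hrefl : ∀ i, le i i)
    (hantisymm : ∀ i j, le i j → le j i → i = j)
    (htrans : ∀ i j l, le i j → le j l → le i l)
    (π : Fin (2 ^ k) → ℕ) (hπ : ∀ i, 0 < π i)
    (hperf : IsCovering (dP le π) (extHamming k) 2 ∧
      IsPacking (dP le π) (extHamming k) 2) :
    ∀ i : Fin (2 ^ k), (∑ j ∈ Finset.univ.filter (fun j => le j i), π j) ≤ 2 :=
  stmt_11_general le hrefl π hπ hperf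
end

section
/- Let k ≥ 2 and let G be a digraph on vertex set {1,…,2^k}. If the extended binary Hamming code H̃_k is a 2-perfect G-code, then every vertex has G-weight at most 2; that is, for every vertex v, the set consisting of v together with all vertices reachable from v by a directed path has size at most 2. -/
/-! The unit vector `e_v` lies within `d_G`-distance 2 of some codeword `c`. A nonzero codeword
has Hamming weight at least 4 (even weight by the all-ones row; weight 2 is excluded because two
distinct positions differ in some binary digit), so `c - e_v` has Hamming weight at least 3, and
the `G`-weight dominates the Hamming weight. Hence `c = 0`, and `d_G(0, e_v) = |⟨v⟩_G| ≤ 2`. -/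

open Classical

noncomputable def wtG {V : Type*} [Fintype V] (E : V → V → Prop) (x : V → ZMod 2) : ℕ :=
  (Finset.univ.filter (fun v => ∃ u, x u ≠ 0 ∧ Relation.ReflTransGen E u v)).card

noncomputable def dG {V : Type*} [Fintype V] (E : V → V → Prop) (x y : V → ZMod 2) : ℕ :=
  wtG E (x - y)

open Finset

section WeightG

variable {V : Type*} [Fintype V] (E : V → V → Prop)

lemma hammingNorm_le_wtG (x : V → ZMod 2) : hammingNorm x ≤ wtG E x :=
  card_le_card fun u hu ↦ by
    simp only [mem_filter, mem_univ, true_and] at hu ⊢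
    exact ⟨u, hu, .refl⟩

lemma hammingDist_le_dG (x y : V → ZMod 2) : hammingDist x y ≤ dG E x y := by
  have : hammingDist x y = hammingNorm (x - y) := by simp [hammingDist, hammingNorm, sub_ne_zero]
  exact this ▸ hammingNorm_le_wtG E (x - y)

lemma dG_zero_left (x : V → ZMod 2) : dG E 0 x = wtG E x := by
  have : (0 : V → ZMod 2) - x = x := funext fun u ↦ by simp [ZMod.neg_eq_self_mod_two]
  rw [dG, this]

lemma wtG_single [DecidableEq V] (v : V) :
    wtG E (Pi.single v 1 : V → ZMod 2) = #{u | Relation.ReflTransGen E v u} := by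
  unfold wtG
  congr 1
  ext w
  simp [Pi.single_apply]

end WeightG

lemma hammingNorm_single_one {ι M : Type*} [Fintype ι] [DecidableEq ι] [Zero M] [One M]
    [DecidableEq M] [NeZero (1 : M)] (v : ι) : hammingNorm (Pi.single v 1 : ι → M) = 1 := by
  simp [hammingNorm, Pi.single_apply, filter_eq']

lemma sum_eq_hammingNorm {ι : Type*} [Fintype ι] (x : ι → ZMod 2) :
    ∑ i, x i = hammingNorm x := by
  rw [← sum_filter_ne_zero, hammingNorm, cast_card]
  exact sum_congr rfl fun i hi ↦ Fin.eq_one_of_ne_zero _ (mem_filter.mp hi).2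

lemma sum_eq_of_support_subset_pair {ι M : Type*} [AddCommMonoid M] {x : ι → M} {a b : ι}
    (hx : ∀ i, x i ≠ 0 → i = a ∨ i = b) {s : Finset ι} (ha : a ∈ s) (hb : b ∉ s) :
    ∑ i ∈ s, x i = x a :=
  sum_eq_single_of_mem a ha fun i hi hia ↦ by
    by_contra hxi
    obtain rfl | rfl := hx i hxi
    exacts [hia rfl, hb hi]

section ExtHamming

variable {k : ℕ} {x : Fin (2 ^ k) → ZMod 2}

lemma even_hammingNorm_of_mem_extHamming (hx : x ∈ extHamming k) : Even (hammingNorm x) := by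
  have h := hx.1
  rwa [sum_eq_hammingNorm, ZMod.natCast_eq_zero_iff_even] at h

lemma exists_testBit_ne_of_ne {a b : Fin (2 ^ k)} (hab : a ≠ b) :
    ∃ j < k, a.val.testBit j ≠ b.val.testBit j := by
  by_contra! h
  refine hab (Fin.ext (Nat.eq_of_testBit_eq fun j ↦ ?_))
  by_cases hj : j < k
  · exact h j hj
  · have hle : 2 ^ k ≤ 2 ^ j := Nat.pow_le_pow_right two_pos (not_lt.mp hj)
    rw [Nat.testBit_lt_two_pow (a.isLt.trans_le hle), Nat.testBit_lt_two_pow (b.isLt.trans_le hle)]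

lemma hammingNorm_ne_two_of_mem_extHamming (hx : x ∈ extHamming k) : hammingNorm x ≠ 2 := by
  intro h2
  obtain ⟨a, b, hab, hsupp⟩ := card_eq_two.mp h2
  have hsupp' : ∀ i, x i ≠ 0 ↔ i = a ∨ i = b := fun i ↦ by
    simpa using congrArg (i ∈ ·) hsupp
  have hpair : ∀ i, x i ≠ 0 → i = a ∨ i = b := fun i ↦ (hsupp' i).mp
  have hxa : x a ≠ 0 := (hsupp' a).mpr (.inl rfl)
  have hxb : x b ≠ 0 := (hsupp' b).mpr (.inr rfl)
  obtain ⟨j, hj, hbit⟩ := exists_testBit_ne_of_ne hab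
  have hrow := hx.2 j hj
  cases hbj : b.val.testBit j
  · rw [sum_eq_of_support_subset_pair hpair (by simp_all) (by simp [hbj])] at hrow
    exact hxa hrow
  · rw [sum_eq_of_support_subset_pair (fun i hi ↦ (hpair i hi).symm) (by simp [hbj])
      (by simp_all)] at hrow
    exact hxb hrow

lemma four_le_hammingNorm_of_mem_extHamming (hx : x ∈ extHamming k) (hne : x ≠ 0) :
    4 ≤ hammingNorm x := by
  have hpos := hammingNorm_pos_iff.mpr hne
  obtain ⟨m, hm⟩ := even_hammingNorm_of_mem_extHamming hx
  have := hammingNorm_ne_two_of_mem_extHamming hx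
  omega

end ExtHamming

theorem stmt_12_general {k : ℕ}
    (E : Fin (2 ^ k) → Fin (2 ^ k) → Prop)
    (hperf : IsCovering (dG E) (extHamming k) 2 ∧
      IsPacking (dG E) (extHamming k) 2) :
    ∀ v : Fin (2 ^ k),
      (Finset.univ.filter (fun u => Relation.ReflTransGen E v u)).card ≤ 2 := by
  intro v
  set e : Fin (2 ^ k) → ZMod 2 := Pi.single v 1
  obtain ⟨c, hc, hce⟩ := hperf.1 e
  rcases eq_or_ne c 0 with rfl | hc0
  · rwa [dG_zero_left, wtG_single] at hce
  · exfalso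
    have h4 := four_le_hammingNorm_of_mem_extHamming hc hc0
    have := calc hammingNorm c
        = hammingDist c 0 := (hammingDist_zero_right c).symm
      _ ≤ hammingDist c e + hammingDist e 0 := hammingDist_triangle c e 0
      _ ≤ dG E c e + 1 := by
        rw [hammingDist_zero_right, hammingNorm_single_one]
        exact Nat.add_le_add_right (hammingDist_le_dG E c e) 1
    omega

theorem stmt_12 {k : ℕ} (hk : 2 ≤ k)
    (E : Fin (2 ^ k) → Fin (2 ^ k) → Prop) (hirrefl : ∀ v, ¬ E v v)
    (hperf : IsCovering (dG E) (extHamming k) 2 ∧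
      IsPacking (dG E) (extHamming k) 2) :
    ∀ v : Fin (2 ^ k),
      (Finset.univ.filter (fun u => Relation.ReflTransGen E v u)).card ≤ 2 :=
  stmt_12_general E hperf
end

section
/- Let k ≥ 2 and let P_π be a weighted poset on {1,…,2^k}. If the extended binary Hamming code H̃_k is a 2-perfect P_π-code, then Ω₁²(1) = 1 + (1/2)·Ω₁¹(1)·(Ω₁¹(1) − 3), i.e., 2·Ω₁²(1) = 2 + Ω₁¹(1)·(Ω₁¹(1) − 3), where Ω_j^ω(i) denotes the number of order ideals of P_π of cardinality i, total weight ω, and exactly j maximal elements (so Ω₁¹(1) is the number of minimal elements of weight 1 and Ω₁²(1) is the number of minimal elements of weight 2). -/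
open Classical

noncomputable def Omega {α : Type*} [Fintype α] (le : α → α → Prop) (π : α → ℕ)
    (j ω i : ℕ) : ℕ :=
  (Finset.univ.filter (fun I : Finset α =>
      (∀ a ∈ I, ∀ b, le b a → b ∈ I) ∧
      I.card = i ∧ (∑ a ∈ I, π a) = ω ∧
      (I.filter (fun a => ∀ b ∈ I, le a b → a = b)).card = j)).card

/-!
Each vector `x` has a unique representative `u` in the radius-2 ball with `x - u` in the code. As the
code has even parity, `u ↦ (representative of u + e)`, for a fixed odd vector `e`, is an involution
of the ball that flips parity: the ball has as many even as odd vectors.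

Positive weights bound the support of a ball vector by 2, and the vector matters only through its
support `s`. Odd: `s = {m}` with `⟨m⟩` of weight ≤ 2, i.e. Ω₁¹(1) + Ω₁²(1) minimal elements and
`c` non-minimal ones, with `⟨m⟩ = {i, m}`. Even: `s = ∅` or `⟨s⟩ = s` of size 2 and weight 2,
i.e. (Ω₁¹(1) choose 2) antichains and the same `c` chains `⟨m⟩`. So
`Ω₁¹(1) + Ω₁²(1) + c = 1 + (Ω₁¹(1) choose 2) + c`.
-/

open Finset

lemma ZMod.eq_one_of_ne_zero_two {a : ZMod 2} (h : a ≠ 0) : a = 1 := by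
  revert a; decide

section ParityBalance

variable {G : Type*} [AddCommGroup G] [Module (ZMod 2) G] {w : G → ℕ} {C : Set G} {r : ℕ}

theorem existsUnique_sub_mem_of_isCovering_of_isPacking
    (hcov : IsCovering (fun x y => w (x - y)) C r) (hpack : IsPacking (fun x y => w (x - y)) C r)
    (x : G) : ∃! u, w u ≤ r ∧ x - u ∈ C := by
  obtain ⟨c, hc, hcx⟩ := hcov x
  refine ⟨x - c, ⟨?_, by rwa [sub_sub_cancel]⟩, ?_⟩
  · rwa [← neg_sub, ZModModule.neg_eq_self]
  rintro u ⟨hu, hxu⟩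
  by_contra hne
  refine hpack _ hxu c hc (fun h => hne ?_) x ⟨?_, hcx⟩
  · rw [← h, sub_sub_cancel]
  · show w (x - u - x) ≤ r
    rwa [sub_sub_cancel_left, ZModModule.neg_eq_self]

theorem card_ball_even_eq_card_ball_odd [Fintype G] (φ : G →+ ZMod 2)
    (hφ : Function.Surjective φ) (hC : ∀ c ∈ C, φ c = 0)
    (hcov : IsCovering (fun x y => w (x - y)) C r) (hpack : IsPacking (fun x y => w (x - y)) C r) :
    #{x | w x ≤ r ∧ φ x = 0} = #{x | w x ≤ r ∧ φ x = 1} := by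
  have hrep := existsUnique_sub_mem_of_isCovering_of_isPacking hcov hpack
  choose rep hrep_mem using fun x => (hrep x).exists
  have hφ_rep (x : G) : φ (rep x) = φ x := by
    have := hC _ (hrep_mem x).2
    rwa [map_sub, sub_eq_zero, eq_comm] at this
  obtain ⟨v, hv⟩ := hφ 1
  have hinv (u : G) (hu : w u ≤ r) : rep (rep (u + v) + v) = u := by
    refine (hrep _).unique (hrep_mem _) ⟨hu, ?_⟩
    convert (hrep_mem (u + v)).2 using 1
    simp only [ZModModule.sub_eq_add]
    abel
  have hφ_flip (u : G) : φ (rep (u + v)) = φ u + 1 := by rw [hφ_rep, map_add, hv]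
  refine card_nbij' (fun u => rep (u + v)) (fun u => rep (u + v)) ?_ ?_
    (fun u hu => hinv u (mem_filter.mp hu).2.1) (fun u hu => hinv u (mem_filter.mp hu).2.1)
  all_goals
    intro u hu
    simp only [coe_filter, mem_univ, true_and, Set.mem_ofPred_eq] at hu ⊢
    refine ⟨(hrep_mem _).1, ?_⟩
    rw [hφ_flip, hu.2]
    decide

end ParityBalance

namespace WeightedPoset

variable {α : Type*} [Fintype α] (le : α → α → Prop) (π : α → ℕ)

noncomputable def downClosure (s : Finset α) : Finset α := {j | ∃ i ∈ s, le j i}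

noncomputable def idealWeight (s : Finset α) : ℕ := ∑ j ∈ downClosure le s, π j

def IsMinimal (m : α) : Prop := ∀ l, le l m → l = m

lemma wtP_eq_idealWeight_support (x : α → ZMod 2) :
    wtP le π x = idealWeight le π {i | x i ≠ 0} := by
  simp [wtP, idealWeight, downClosure]

variable {le π}

lemma mem_downClosure {s : Finset α} {j : α} : j ∈ downClosure le s ↔ ∃ i ∈ s, le j i := by
  simp [downClosure]

lemma subset_downClosure (hrefl : ∀ i, le i i) (s : Finset α) : s ⊆ downClosure le s :=
  fun i hi => mem_downClosure.mpr ⟨i, hi, hrefl i⟩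

lemma downClosure_mono {s t : Finset α} (h : s ⊆ t) : downClosure le s ⊆ downClosure le t :=
  fun j hj => by
    obtain ⟨i, hi, hji⟩ := mem_downClosure.mp hj
    exact mem_downClosure.mpr ⟨i, h hi, hji⟩

lemma downClosure_downClosure (hrefl : ∀ i, le i i) (htrans : ∀ i j l, le i j → le j l → le i l)
    (s : Finset α) : downClosure le (downClosure le s) = downClosure le s := by
  refine (subset_downClosure hrefl _).antisymm' fun j hj => ?_
  obtain ⟨i, hi, hji⟩ := mem_downClosure.mp hj
  obtain ⟨l, hl, hil⟩ := mem_downClosure.mp hi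
  exact mem_downClosure.mpr ⟨l, hl, htrans j i l hji hil⟩

lemma downClosure_eq_self (hrefl : ∀ i, le i i) {s : Finset α} (hs : ∀ i ∈ s, IsMinimal le i) :
    downClosure le s = s := by
  refine (subset_downClosure hrefl s).antisymm' fun j hj => ?_
  obtain ⟨i, hi, hji⟩ := mem_downClosure.mp hj
  rwa [hs i hi j hji]

lemma card_downClosure_le_idealWeight (hπ : ∀ i, 0 < π i) (s : Finset α) :
    #(downClosure le s) ≤ idealWeight le π s := by
  simpa [idealWeight] using card_nsmul_le_sum _ π 1 fun i _ => hπ i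

lemma card_le_idealWeight (hrefl : ∀ i, le i i) (hπ : ∀ i, 0 < π i) (s : Finset α) :
    #s ≤ idealWeight le π s :=
  (card_le_card (subset_downClosure hrefl s)).trans (card_downClosure_le_idealWeight hπ s)

lemma idealWeight_downClosure (hrefl : ∀ i, le i i) (htrans : ∀ i j l, le i j → le j l → le i l)
    (s : Finset α) : idealWeight le π (downClosure le s) = idealWeight le π s := by
  rw [idealWeight, downClosure_downClosure hrefl htrans, idealWeight]

lemma idealWeight_eq_sum (hrefl : ∀ i, le i i) {s : Finset α} (hs : ∀ i ∈ s, IsMinimal le i) :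
    idealWeight le π s = ∑ i ∈ s, π i := by
  rw [idealWeight, downClosure_eq_self hrefl hs]

lemma two_le_card_downClosure (hrefl : ∀ i, le i i) {m : α} (hm : ¬ IsMinimal le m) :
    2 ≤ #(downClosure le {m}) := by
  obtain ⟨l, hlm, hne⟩ : ∃ l, le l m ∧ l ≠ m := by simpa [IsMinimal] using hm
  calc 2 = #{l, m} := (card_pair hne).symm
    _ ≤ _ := card_le_card <| insert_subset (mem_downClosure.mpr ⟨m, mem_singleton_self m, hlm⟩)
        (singleton_subset_iff.mpr (subset_downClosure hrefl _ (mem_singleton_self m)))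

lemma card_filter_support [DecidableEq α] (P : Finset α → Prop) [DecidablePred P] :
    #{x : α → ZMod 2 | P {i | x i ≠ 0}} = #{s : Finset α | P s} := by
  refine card_nbij' (fun x => ({i | x i ≠ 0} : Finset α)) (fun s i => if i ∈ s then 1 else 0)
    ?_ ?_ ?_ ?_
  · intro x hx
    simpa using hx
  · intro s hs
    simpa using hs
  · intro x _
    funext i
    by_cases hi : x i = 0 <;> simp [hi, ZMod.eq_one_of_ne_zero_two]
  · intro s _
    ext i
    by_cases hi : i ∈ s <;> simp [hi]

lemma sum_eq_card_support (x : α → ZMod 2) : ∑ i, x i = (#{i | x i ≠ 0} : ZMod 2) := by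
  rw [← sum_filter_ne_zero,
    sum_congr rfl fun i hi => ZMod.eq_one_of_ne_zero_two (mem_filter.mp hi).2]
  simp

lemma card_wtP_ball_eq_card_idealWeight [DecidableEq α] (r : ℕ) (p : ZMod 2) :
    #{x : α → ZMod 2 | wtP le π x ≤ r ∧ ∑ i, x i = p}
      = #{s : Finset α | idealWeight le π s ≤ r ∧ (#s : ZMod 2) = p} := by
  rw [← card_filter_support]
  simp only [wtP_eq_idealWeight_support, sum_eq_card_support]

lemma card_filter_card_eq_one (P : Finset α → Prop) [DecidablePred P] :
    #{s : Finset α | #s = 1 ∧ P s} = #{m | P {m}} := by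
  rw [← filter_filter, ← powerset_univ, ← powersetCard_eq_filter, powersetCard_one, filter_map,
    card_map]
  rfl

lemma card_idealWeight_le_two_odd (hrefl : ∀ i, le i i) (hπ : ∀ i, 0 < π i) :
    #{s : Finset α | idealWeight le π s ≤ 2 ∧ (#s : ZMod 2) = 1}
      = #{m | idealWeight le π {m} ≤ 2} := by
  rw [← card_filter_card_eq_one fun s => idealWeight le π s ≤ 2]
  congr 1
  ext s
  simp only [mem_filter, mem_univ, true_and]
  constructor
  · rintro ⟨hs, hodd⟩
    have := (card_le_idealWeight hrefl hπ s).trans hs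
    rw [ZMod.natCast_eq_one_iff_odd, Nat.odd_iff] at hodd
    exact ⟨by omega, hs⟩
  · rintro ⟨h1, hs⟩
    exact ⟨hs, by simp [h1]⟩

lemma card_idealWeight_le_two_even (hrefl : ∀ i, le i i) (hπ : ∀ i, 0 < π i) :
    #{s : Finset α | idealWeight le π s ≤ 2 ∧ (#s : ZMod 2) = 0}
      = 1 + #{s : Finset α | #s = 2 ∧ idealWeight le π s ≤ 2} := by
  have hempty : idealWeight le π (∅ : Finset α) = 0 := by simp [idealWeight, downClosure]
  rw [add_comm, ← card_insert_of_notMem (s := {s : Finset α | #s = 2 ∧ _}) (a := ∅) (by simp)]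
  congr 1
  ext s
  simp only [mem_filter, mem_univ, true_and, mem_insert]
  constructor
  · rintro ⟨hs, heven⟩
    have := (card_le_idealWeight hrefl hπ s).trans hs
    rw [ZMod.natCast_eq_zero_iff_even, Nat.even_iff] at heven
    rcases (by omega : #s = 0 ∨ #s = 2) with h | h
    · exact .inl (card_eq_zero.mp h)
    · exact .inr ⟨h, hs⟩
  · rintro (rfl | ⟨h, hs⟩)
    · simp [hempty]
    · exact ⟨hs, by rw [h]; decide⟩

lemma card_idealWeight_singleton_le_two (hrefl : ∀ i, le i i) (hπ : ∀ i, 0 < π i) :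
    #{m | idealWeight le π {m} ≤ 2}
      = #{m | IsMinimal le m ∧ π m = 1} + #{m | IsMinimal le m ∧ π m = 2}
        + #{m | ¬ IsMinimal le m ∧ idealWeight le π {m} ≤ 2} := by
  rw [← card_union_of_disjoint, ← card_union_of_disjoint]
  · congr 1
    ext m
    simp only [mem_filter, mem_union, mem_univ, true_and]
    by_cases hm : IsMinimal le m
    · rw [idealWeight_eq_sum hrefl (by simpa using hm), sum_singleton]
      have := hπ m
      simp only [hm, true_and, not_true_eq_false, false_and, or_false]
      omega
    · simp [hm]
  · simp only [disjoint_left, mem_union, mem_filter, mem_univ, true_and]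
    tauto
  · simp only [disjoint_left, mem_filter, mem_univ, true_and]
    omega

lemma filter_pairs_isMinimal_eq_powersetCard (hrefl : ∀ i, le i i) (hπ : ∀ i, 0 < π i) :
    ({s | (#s = 2 ∧ idealWeight le π s ≤ 2) ∧ ∀ i ∈ s, IsMinimal le i} : Finset (Finset α))
      = powersetCard 2 {m | IsMinimal le m ∧ π m = 1} := by
  ext s
  simp only [mem_filter, mem_univ, true_and, mem_powersetCard]
  constructor
  · rintro ⟨⟨hcard, hs⟩, hmin⟩
    obtain ⟨a, b, hab, rfl⟩ := card_eq_two.mp hcard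
    rw [idealWeight_eq_sum hrefl hmin, sum_pair hab] at hs
    have := hπ a
    have := hπ b
    simp only [mem_insert, mem_singleton, forall_eq_or_imp, forall_eq] at hmin
    simp only [insert_subset_iff, singleton_subset_iff, mem_filter, mem_univ, true_and]
    exact ⟨⟨⟨hmin.1, by omega⟩, ⟨hmin.2, by omega⟩⟩, hcard⟩
  · rintro ⟨hsub, hcard⟩
    have hmin : ∀ i ∈ s, IsMinimal le i := fun i hi => (mem_filter.mp (hsub hi)).2.1
    refine ⟨⟨hcard, ?_⟩, hmin⟩
    rw [idealWeight_eq_sum hrefl hmin, sum_congr rfl fun i hi => (mem_filter.mp (hsub hi)).2.2]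
    simp [hcard]

lemma card_pairs_idealWeight_le_two (hrefl : ∀ i, le i i) (hπ : ∀ i, 0 < π i) :
    #{s : Finset α | #s = 2 ∧ idealWeight le π s ≤ 2}
      = (#{m | IsMinimal le m ∧ π m = 1}).choose 2
        + #{s : Finset α | #s = 2 ∧ idealWeight le π s ≤ 2 ∧ ¬ ∀ i ∈ s, IsMinimal le i} := by
  rw [← card_powersetCard, ← filter_pairs_isMinimal_eq_powersetCard hrefl hπ,
    ← card_filter_add_card_filter_not (fun s : Finset α => ∀ i ∈ s, IsMinimal le i),
    filter_filter, filter_filter]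
  simp only [and_assoc]

lemma card_not_isMinimal_eq_card_pairs (hrefl : ∀ i, le i i)
    (hantisymm : ∀ i j, le i j → le j i → i = j) (htrans : ∀ i j l, le i j → le j l → le i l)
    (hπ : ∀ i, 0 < π i) :
    #{m | ¬ IsMinimal le m ∧ idealWeight le π {m} ≤ 2}
      = #{s : Finset α | #s = 2 ∧ idealWeight le π s ≤ 2 ∧ ¬ ∀ i ∈ s, IsMinimal le i} := by
  refine card_bij (fun m _ => downClosure le {m}) ?_ ?_ ?_
  · intro m hm
    simp only [mem_filter, mem_univ, true_and] at hm ⊢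
    have hcard := card_downClosure_le_idealWeight (le := le) hπ {m}
    refine ⟨by linarith [two_le_card_downClosure hrefl hm.1], ?_, fun h => hm.1 ?_⟩
    · rw [idealWeight_downClosure hrefl htrans]
      exact hm.2
    · exact h m (subset_downClosure hrefl _ (mem_singleton_self m))
  · intro m _ m' _ h
    have hm : m ∈ downClosure le {m'} := h ▸ subset_downClosure hrefl _ (mem_singleton_self m)
    have hm' : m' ∈ downClosure le {m} := h ▸ subset_downClosure hrefl _ (mem_singleton_self m')
    simp only [mem_downClosure, mem_singleton, exists_eq_left] at hm hm'
    exact hantisymm m m' hm hm'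
  · intro s hs
    simp only [mem_filter, mem_univ, true_and, not_forall] at hs ⊢
    obtain ⟨hcard, hs, j, hj, hjmin⟩ := hs
    have hideal : s = downClosure le s := eq_of_subset_of_card_le (subset_downClosure hrefl s)
      (by linarith [card_downClosure_le_idealWeight (le := le) hπ s])
    have hj_ideal : downClosure le {j} = s := by
      refine eq_of_subset_of_card_le ?_ (by linarith [two_le_card_downClosure hrefl hjmin])
      exact hideal ▸ downClosure_mono (singleton_subset_iff.mpr hj)
    refine ⟨j, ⟨hjmin, ?_⟩, hj_ideal⟩
    rwa [← idealWeight_downClosure hrefl htrans, hj_ideal]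

lemma Omega_one_one (ω : ℕ) : Omega le π 1 ω 1 = #{m | IsMinimal le m ∧ π m = ω} := by
  calc Omega le π 1 ω 1
      = #{I : Finset α | #I = 1 ∧ (∀ a ∈ I, ∀ b, le b a → b ∈ I) ∧ ∑ a ∈ I, π a = ω} := by
        rw [Omega]
        congr 1
        ext I
        simp only [mem_filter, mem_univ, true_and]
        constructor
        · rintro ⟨hI, h1, hω, -⟩
          exact ⟨h1, hI, hω⟩
        · rintro ⟨h1, hI, hω⟩
          obtain ⟨m, rfl⟩ := card_eq_one.mp h1
          exact ⟨hI, h1, hω, by simp [filter_singleton]⟩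
    _ = _ := by
        rw [card_filter_card_eq_one]
        congr 1
        ext m
        simp only [mem_filter, mem_univ, true_and]
        simp [IsMinimal]

end WeightedPoset

lemma two_mul_choose_two (n : ℕ) : (2 * n.choose 2 : ℤ) = n * (n - 1) := by
  have h : (2 * n.choose 2 : ℚ) = n * (n - 1) := by
    rw [Nat.cast_choose_two]
    ring
  exact_mod_cast h

open WeightedPoset in
theorem stmt_14_general {k : ℕ}
    (le : Fin (2 ^ k) → Fin (2 ^ k) → Prop)
    (hrefl : ∀ i, le i i)
    (hantisymm : ∀ i j, le i j → le j i → i = j)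
    (htrans : ∀ i j l, le i j → le j l → le i l)
    (π : Fin (2 ^ k) → ℕ) (hπ : ∀ i, 0 < π i)
    (hperf : IsCovering (dP le π) (extHamming k) 2 ∧
      IsPacking (dP le π) (extHamming k) 2) :
    2 * (Omega le π 1 2 1 : ℤ) =
      2 + (Omega le π 1 1 1 : ℤ) * ((Omega le π 1 1 1 : ℤ) - 3) := by
  let parity : (Fin (2 ^ k) → ZMod 2) →+ ZMod 2 :=
    AddMonoidHom.mk' (fun x => ∑ i, x i) fun x y => sum_add_distrib
  have hparity : Function.Surjective parity := fun p => ⟨Pi.single 0 p, by simp [parity]⟩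
  have hbalance := card_ball_even_eq_card_ball_odd parity hparity (fun c hc => hc.1) hperf.1 hperf.2
  simp only [parity, AddMonoidHom.mk'_apply] at hbalance
  rw [card_wtP_ball_eq_card_idealWeight, card_wtP_ball_eq_card_idealWeight,
    card_idealWeight_le_two_even hrefl hπ, card_idealWeight_le_two_odd hrefl hπ,
    card_pairs_idealWeight_le_two hrefl hπ, card_idealWeight_singleton_le_two hrefl hπ,
    ← card_not_isMinimal_eq_card_pairs hrefl hantisymm htrans hπ] at hbalance
  rw [Omega_one_one, Omega_one_one]
  set a := #{m | IsMinimal le m ∧ π m = 1}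
  have hcount : (1 + a.choose 2 : ℤ) = a + #{m | IsMinimal le m ∧ π m = 2} := by
    norm_cast
    omega
  linear_combination two_mul_choose_two a - 2 * hcount

theorem stmt_14 {k : ℕ} (hk : 2 ≤ k)
    (le : Fin (2 ^ k) → Fin (2 ^ k) → Prop)
    (hrefl : ∀ i, le i i)
    (hantisymm : ∀ i j, le i j → le j i → i = j)
    (htrans : ∀ i j l, le i j → le j l → le i l)
    (π : Fin (2 ^ k) → ℕ) (hπ : ∀ i, 0 < π i)
    (hperf : IsCovering (dP le π) (extHamming k) 2 ∧
      IsPacking (dP le π) (extHamming k) 2) :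
    2 * (Omega le π 1 2 1 : ℤ) =
      2 + (Omega le π 1 1 1 : ℤ) * ((Omega le π 1 1 1 : ℤ) - 3) :=
  stmt_14_general le hrefl hantisymm htrans π hπ hperf
end
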